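/- arXiv:2212.12251 — 2 statements merged into one kernel-verified Lean document; each statement's English description precedes it below -/
import Mathlib

section
/- Group-Contraction Lemma: For a social welfare function satisfying Pareto and IIA on at least 3 alternatives, if D is a decisive coalition with |D| ≥ 2, then there is a proper nonempty subset D' ⊊ D that is also decisive. -/
/-- A strict linear order (complete, transitive, irreflexive preference) on `X`. -/
def SLO (X : Type*) : Type _ := {r : X → X → Prop // IsStrictTotalOrder X r}

/-- Pareto: unanimous strict preference is replicated socially. -/
def Pareto {X ι : Type*} (f : (ι → SLO X) → SLO X) : Prop :=
  ∀ P : ι → SLO X, ∀ a b : X, (∀ i, (P i).1 a b) → (f P).1 a b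

/-- Independence of irrelevant alternatives. -/
def IIA {X ι : Type*} (f : (ι → SLO X) → SLO X) : Prop :=
  ∀ P P' : ι → SLO X, ∀ a b : X,
    (∀ i, (P i).1 a b ↔ (P' i).1 a b) → ((f P).1 a b ↔ (f P').1 a b)

/-- A coalition `D` is `(a,b)`-decisive. -/
def PairDecisive {X ι : Type*} (f : (ι → SLO X) → SLO X) (D : Set ι) (a b : X) : Prop :=
  ∀ P : ι → SLO X, (∀ i ∈ D, (P i).1 a b) → (f P).1 a b

/-- A coalition is decisive if it is `(a,b)`-decisive for all distinct `a, b`. -/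
def Decisive {X ι : Type*} (f : (ι → SLO X) → SLO X) (D : Set ι) : Prop :=
  ∀ a b : X, a ≠ b → PairDecisive f D a b

/-- `d` is a dictator for `f`. -/
def IsDictator {X ι : Type*} (f : (ι → SLO X) → SLO X) (d : ι) : Prop :=
  ∀ P : ι → SLO X, ∀ a b : X, (P d).1 a b → (f P).1 a b

/-!
Fix `i₀ ∈ D` and three alternatives `x, y, z`, and let `i₀` rank `x ≻ y ≻ z`, the rest of `D`
rank `y ≻ z ≻ x` and everyone outside `D` rank `z ≻ x ≻ y`. Since `D` is decisive, society ranks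
`y ≻ z`. If society also ranks `x ≻ z`, then `{i₀}` carries `x` over `z` against everybody else;
otherwise society ranks `y ≻ z ≻ x`, and `D \ {i₀}` carries `y` over `x` against everybody else.
By IIA this makes one of the two coalitions almost decisive over a pair, and Sen's field expansion
(Pareto, IIA and a third alternative) turns almost decisiveness over one pair into decisiveness.
-/

open Function Cardinal

namespace SLO

variable {X : Type*}

theorem trans (r : SLO X) {a b c : X} : r.1 a b → r.1 b c → r.1 a c :=
  haveI := r.2
  trans_of r.1

theorem asymm (r : SLO X) {a b : X} : r.1 a b → ¬ r.1 b a :=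
  haveI := r.2
  asymm_of r.1

theorem rel_of_not_rel (r : SLO X) {a b : X} (hab : a ≠ b) (h : ¬ r.1 a b) : r.1 b a :=
  haveI := r.2
  ((trichotomous_of r.1 a b).resolve_left h).resolve_left hab

def ofInjective {α : Type*} [LinearOrder α] (k : X → α) (hk : Injective k) : SLO X :=
  ⟨(· < ·) on k, hk.isStrictTotalOrder_onFun (· < ·)⟩

noncomputable def ofRank (g : X → ℕ) : SLO X :=
  ofInjective (fun x => toLex (g x, embeddingToCardinal x))
    fun _ _ h => embeddingToCardinal.injective (congrArg Prod.snd (toLex.injective h))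

theorem ofRank_rel {g : X → ℕ} {a b : X} (h : g a < g b) : (ofRank g).1 a b :=
  Prod.Lex.toLex_lt_toLex.2 (Or.inl h)

noncomputable def ofTriple [DecidableEq X] (a b c : X) : SLO X :=
  ofRank fun w => if w = a then 0 else if w = b then 1 else if w = c then 2 else 3

variable [DecidableEq X] {a b c : X}

theorem ofTriple_fst_snd (hba : b ≠ a) : (ofTriple a b c).1 a b :=
  ofRank_rel (by grind)

theorem ofTriple_fst_thd (hca : c ≠ a) : (ofTriple a b c).1 a c :=
  ofRank_rel (by grind)

theorem ofTriple_snd_thd (hca : c ≠ a) (hcb : c ≠ b) : (ofTriple a b c).1 b c :=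
  ofRank_rel (by grind)

end SLO

open SLO

section Coalitions

variable {X ι : Type*} {f : (ι → SLO X) → SLO X} {D : Set ι} {a b c : X}

def AlmostDecisive (f : (ι → SLO X) → SLO X) (D : Set ι) (a b : X) : Prop :=
  ∀ P : ι → SLO X, (∀ i ∈ D, (P i).1 a b) → (∀ i ∉ D, (P i).1 b a) → (f P).1 a b

theorem PairDecisive.almostDecisive (h : PairDecisive f D a b) : AlmostDecisive f D a b :=
  fun P hD _ => h P hD

theorem AlmostDecisive.of_profile (hI : IIA f) (Q : ι → SLO X) (hD : ∀ i ∈ D, (Q i).1 a b)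
    (hDc : ∀ i ∉ D, (Q i).1 b a) (hQ : (f Q).1 a b) : AlmostDecisive f D a b := by
  intro P hPD hPDc
  refine (hI Q P a b fun i => ?_).1 hQ
  by_cases hi : i ∈ D
  · exact iff_of_true (hD i hi) (hPD i hi)
  · exact iff_of_false ((Q i).asymm (hDc i hi)) ((P i).asymm (hPDc i hi))

section FieldExpansion

variable (hP : Pareto f) (hI : IIA f)
include hP hI

theorem AlmostDecisive.spread_right (h : AlmostDecisive f D a b) (hab : a ≠ b) (hca : c ≠ a)
    (hcb : c ≠ b) : PairDecisive f D a c := by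
  classical
  intro P hPD
  -- `Q` agrees with `P` on `(a, c)`, and socially `a ≻ b ≻ c` in `Q`; IIA transfers `a ≻ c` to `P`.
  let Q : ι → SLO X := fun i =>
    if i ∈ D then ofTriple a b c else if (P i).1 a c then ofTriple b a c else ofTriple b c a
  have hQab : (f Q).1 a b := by
    refine h Q (fun i hi => ?_) fun i hi => ?_
    · simpa [Q, hi] using ofTriple_fst_snd hab.symm
    · by_cases hPac : (P i).1 a c
      · simpa [Q, hi, hPac] using ofTriple_fst_snd hab
      · simpa [Q, hi, hPac] using ofTriple_fst_thd hab
  have hQbc : (f Q).1 b c := by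
    refine hP Q b c fun i => ?_
    by_cases hi : i ∈ D
    · simpa [Q, hi] using ofTriple_snd_thd hca hcb
    · by_cases hPac : (P i).1 a c
      · simpa [Q, hi, hPac] using ofTriple_fst_thd hcb
      · simpa [Q, hi, hPac] using ofTriple_fst_snd hcb
  have hQP : ∀ i, (Q i).1 a c ↔ (P i).1 a c := by
    intro i
    by_cases hi : i ∈ D
    · simpa [Q, hi, hPD i hi] using ofTriple_fst_thd hca
    · by_cases hPac : (P i).1 a c
      · simpa [Q, hi, hPac] using ofTriple_snd_thd hcb hca
      · simpa [Q, hi, hPac] using (ofTriple b c a).asymm (ofTriple_snd_thd hab hca.symm)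
  exact (hI Q P a c hQP).1 ((f Q).trans hQab hQbc)

theorem AlmostDecisive.spread_left (h : AlmostDecisive f D a b) (hab : a ≠ b) (hca : c ≠ a)
    (hcb : c ≠ b) : PairDecisive f D c b := by
  classical
  intro P hPD
  let Q : ι → SLO X := fun i =>
    if i ∈ D then ofTriple c a b else if (P i).1 c b then ofTriple c b a else ofTriple b c a
  have hQca : (f Q).1 c a := by
    refine hP Q c a fun i => ?_
    by_cases hi : i ∈ D
    · simpa [Q, hi] using ofTriple_fst_snd hca.symm
    · by_cases hPcb : (P i).1 c b
      · simpa [Q, hi, hPcb] using ofTriple_fst_thd hca.symm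
      · simpa [Q, hi, hPcb] using ofTriple_snd_thd hab hca.symm
  have hQab : (f Q).1 a b := by
    refine h Q (fun i hi => ?_) fun i hi => ?_
    · simpa [Q, hi] using ofTriple_snd_thd hcb.symm hab.symm
    · by_cases hPcb : (P i).1 c b
      · simpa [Q, hi, hPcb] using ofTriple_snd_thd hca.symm hab
      · simpa [Q, hi, hPcb] using ofTriple_fst_thd hab
  have hQP : ∀ i, (Q i).1 c b ↔ (P i).1 c b := by
    intro i
    by_cases hi : i ∈ D
    · simpa [Q, hi, hPD i hi] using ofTriple_fst_thd hcb.symm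
    · by_cases hPcb : (P i).1 c b
      · simpa [Q, hi, hPcb] using ofTriple_fst_snd hcb.symm
      · simpa [Q, hi, hPcb] using (ofTriple b c a).asymm (ofTriple_fst_snd hcb)
  exact (hI Q P c b hQP).1 ((f Q).trans hQca hQab)

variable (hX : 3 ≤ #X)
include hX

theorem AlmostDecisive.pairDecisive_left (h : AlmostDecisive f D a b) (hab : a ≠ b) :
    ∀ y, y ≠ a → PairDecisive f D a y := by
  intro y hya
  by_cases hyb : y = b
  · subst hyb
    obtain ⟨c, hca, hcy⟩ := exists_ne_ne_of_three_le hX a y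
    exact (h.spread_right hP hI hab hca hcy).almostDecisive.spread_right hP hI hca.symm hya
      (Ne.symm hcy)
  · exact h.spread_right hP hI hab hya hyb

theorem AlmostDecisive.pairDecisive_right (h : AlmostDecisive f D a b) (hab : a ≠ b) :
    ∀ x, x ≠ b → PairDecisive f D x b := by
  intro x hxb
  by_cases hxa : x = a
  · subst hxa
    exact h.pairDecisive_left hP hI hX hab b hab.symm
  · exact h.spread_left hP hI hab hxa hxb

theorem AlmostDecisive.decisive (h : AlmostDecisive f D a b) (hab : a ≠ b) : Decisive f D := by
  have h_of_ne : ∀ x, x ≠ b → ∀ y, y ≠ x → PairDecisive f D x y := fun x hxb =>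
    (h.pairDecisive_right hP hI hX hab x hxb).almostDecisive.pairDecisive_left hP hI hX hxb
  intro x y hxy
  by_cases hxb : x = b
  · subst hxb
    obtain ⟨c, hca, hcx⟩ := exists_ne_ne_of_three_le hX a x
    have hxa : PairDecisive f D x a :=
      (h_of_ne c hcx a hca.symm).almostDecisive.pairDecisive_right hP hI hX hca x hab.symm
    exact hxa.almostDecisive.pairDecisive_left hP hI hX hab.symm y hxy.symm
  · exact h_of_ne x hxb y hxy.symm

end FieldExpansion

theorem Decisive.almostDecisive_singleton_or_diff (hI : IIA f) (hD : Decisive f D) (i₀ : ι)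
    {x y z : X} (hxy : x ≠ y) (hxz : x ≠ z) (hyz : y ≠ z) :
    AlmostDecisive f {i₀} x z ∨ AlmostDecisive f (D \ {i₀}) y x := by
  classical
  let Q : ι → SLO X := fun i =>
    if i = i₀ then ofTriple x y z else if i ∈ D then ofTriple y z x else ofTriple z x y
  have hQyz : (f Q).1 y z := by
    refine hD y z hyz Q fun i hi => ?_
    by_cases hii₀ : i = i₀
    · simpa [Q, hii₀] using ofTriple_snd_thd hxz.symm hyz.symm
    · simpa [Q, hii₀, hi] using ofTriple_fst_snd hyz.symm
  by_cases hQxz : (f Q).1 x z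
  · refine .inl (.of_profile hI Q (fun i hi => ?_) (fun i hi => ?_) hQxz)
    · simpa [Q, Set.mem_singleton_iff.1 hi] using ofTriple_fst_thd hxz.symm
    · by_cases hiD : i ∈ D
      · simpa [Q, Set.mem_singleton_iff.not.1 hi, hiD] using ofTriple_snd_thd hxy hxz
      · simpa [Q, Set.mem_singleton_iff.not.1 hi, hiD] using ofTriple_fst_snd hxz
  · have hQyx : (f Q).1 y x := (f Q).trans hQyz ((f Q).rel_of_not_rel hxz hQxz)
    refine .inr (.of_profile hI Q (fun i hi => ?_) (fun i hi => ?_) hQyx)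
    · simpa [Q, hi.1, Set.mem_singleton_iff.not.1 hi.2] using ofTriple_fst_thd hxy
    · by_cases hii₀ : i = i₀
      · simpa [Q, hii₀] using ofTriple_fst_snd hxy.symm
      · have hiD : i ∉ D := fun hiD => hi ⟨hiD, hii₀⟩
        simpa [Q, hii₀, hiD] using ofTriple_snd_thd hyz hxy.symm

end Coalitions

theorem group_contraction_general {X ι : Type*} [Fintype X]
    (hX : 3 ≤ Fintype.card X)
    (f : (ι → SLO X) → SLO X) (hP : Pareto f) (hI : IIA f)
    (D : Finset ι) (hcard : 2 ≤ D.card) (hD : Decisive f (D : Set ι)) :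
    ∃ D' : Finset ι, D' ⊂ D ∧ D'.Nonempty ∧ Decisive f (D' : Set ι) := by
  classical
  have hX' : 3 ≤ #X := by rw [mk_fintype]; exact_mod_cast hX
  obtain ⟨x, y, z, hxy, hxz, hyz⟩ := Fintype.two_lt_card_iff.1 hX
  obtain ⟨i₀, hi₀, j, hj, hi₀j⟩ := Finset.one_lt_card.1 hcard
  rcases hD.almostDecisive_singleton_or_diff hI i₀ hxy hxz hyz with h | h
  · refine ⟨{i₀}, ?_, Finset.singleton_nonempty i₀, ?_⟩
    · exact (Finset.ssubset_iff_of_subset (Finset.singleton_subset_iff.2 hi₀)).2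
        ⟨j, hj, Finset.notMem_singleton.2 hi₀j.symm⟩
    · rw [Finset.coe_singleton]
      exact h.decisive hP hI hX' hxz
  · refine ⟨D.erase i₀, Finset.erase_ssubset hi₀, ⟨j, Finset.mem_erase.2 ⟨hi₀j.symm, hj⟩⟩, ?_⟩
    rw [Finset.coe_erase]
    exact h.decisive hP hI hX' hxy.symm

theorem group_contraction {X ι : Type*} [Fintype X] [Fintype ι]
    (hX : 3 ≤ Fintype.card X)
    (f : (ι → SLO X) → SLO X) (hP : Pareto f) (hI : IIA f)
    (D : Finset ι) (hcard : 2 ≤ D.card) (hD : Decisive f (D : Set ι)) :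
    ∃ D' : Finset ι, D' ⊂ D ∧ D'.Nonempty ∧ Decisive f (D' : Set ι) :=
  group_contraction_general hX f hP hI D hcard hD
end

section
/- Brouwer's fixed-point theorem for the disk implies the 2-dimensional Sperner lemma: if every continuous self-map of the standard 2-simplex has a fixed point, then every Sperner labelling of any triangulation of the 2-simplex admits a fully labelled small triangle. -/
/-- A triangulation of the standard `n`-simplex `stdSimplex ℝ (Fin (n+1))`:
a finite family of geometric `n`-cells (given by their vertex sets), each affinely
independent with `n+1` vertices, covering the simplex and meeting face-to-face. -/
structure Triangulation (n : ℕ) where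
  cells : Finset (Finset (Fin (n + 1) → ℝ))
  card_cells : ∀ s ∈ cells, s.card = n + 1
  indep : ∀ s ∈ cells,
    AffineIndependent ℝ (Subtype.val : {x // x ∈ s} → (Fin (n + 1) → ℝ))
  covers : (⋃ s ∈ cells, convexHull ℝ (s : Set (Fin (n + 1) → ℝ)))
      = stdSimplex ℝ (Fin (n + 1))
  face_to_face : ∀ s ∈ cells, ∀ t ∈ cells,
    convexHull ℝ (s : Set (Fin (n + 1) → ℝ)) ∩ convexHull ℝ (t : Set (Fin (n + 1) → ℝ))
      = convexHull ℝ ((s ∩ t : Finset (Fin (n + 1) → ℝ)) : Set (Fin (n + 1) → ℝ))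

/-- The vertex set of a triangulation. -/
noncomputable def Triangulation.verts {n : ℕ} (T : Triangulation n) : Finset (Fin (n + 1) → ℝ) :=
  T.cells.sup id

/-- A Sperner labelling: every vertex of the triangulation receives a label whose
barycentric coordinate (with respect to the standard simplex) at that vertex is positive,
i.e. a vertex in the interior of the face spanned by `{v_i : i ∈ I}` gets a label in `I`. -/
def IsSpernerLabelling {n : ℕ} (T : Triangulation n)
    (L : (Fin (n + 1) → ℝ) → Fin (n + 1)) : Prop :=
  ∀ v ∈ T.verts, 0 < v (L v)

/-!
Extend the labelling affinely over the cells to a continuous self-map `f` of the simplex sending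
each vertex `v` to the corner `e (L v)`, and take a fixed point `x` of `f` followed by the cyclic
shift of coordinates, so that `x i = f x (i + 1)`. If `x` lies in the cell `s`, then `f x j` is the
total weight of the vertices of `s` labelled `j`, while by the Sperner condition `x j > 0` as soon
as some vertex of positive weight is labelled `j`. Hence `x i > 0` forces a vertex labelled `i + 1`
of positive weight, so `x (i + 1) > 0`; going around the cycle, every label occurs in `s`.
-/

open Finset

theorem continuousOn_of_isCompact_graphOn {X Y : Type*} [TopologicalSpace X] [T2Space X]
    [TopologicalSpace Y] {f : X → Y} {K : Set X} (hK : IsCompact (K.graphOn f)) :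
    ContinuousOn f K := by
  refine continuousOn_iff_isClosed.2 fun t ht => ⟨_, ((hK.inter_right
    (ht.preimage continuous_snd)).image continuous_fst).isClosed, ?_⟩
  ext x
  simp only [Set.mem_inter_iff, Set.mem_preimage, Set.mem_image, Set.mem_graphOn, Prod.exists]
  constructor
  · rintro ⟨hxt, hxK⟩
    exact ⟨⟨x, f x, ⟨⟨hxK, rfl⟩, hxt⟩, rfl⟩, hxK⟩
  · rintro ⟨⟨a, b, ⟨⟨haK, rfl⟩, hbt⟩, rfl⟩, hxK⟩
    exact ⟨hbt, hxK⟩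

theorem comp_equiv_mem_stdSimplex {𝕜 ι : Type*} [Semiring 𝕜] [PartialOrder 𝕜] [Fintype ι]
    {x : ι → 𝕜} (hx : x ∈ stdSimplex 𝕜 ι) (e : ι ≃ ι) : x ∘ e ∈ stdSimplex 𝕜 ι :=
  ⟨fun i => hx.1 (e i), by rw [← hx.2]; exact e.sum_comp x⟩

theorem Fin.forall_of_imp_add_one {n : ℕ} {P : Fin (n + 1) → Prop} {a : Fin (n + 1)}
    (ha : P a) (hP : ∀ i, P i → P (i + 1)) (i : Fin (n + 1)) : P i := by
  have h : ∀ k : Fin (n + 1), P (a + k) := by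
    refine Fin.induction (by simpa using ha) fun k hk => ?_
    simpa [← Fin.coeSucc_eq_succ, ← add_assoc] using hP _ hk
  simpa using h (i - a)

theorem Finset.sum_extend_val {α β M : Type*} [Zero β] [AddCommMonoid M] (s : Finset α)
    (c : s → β) (f : α → β → M) :
    ∑ v ∈ s, f v (Function.extend Subtype.val c 0 v) = ∑ v : s, f v (c v) := by
  rw [← sum_coe_sort]
  exact sum_congr rfl fun v _ => by rw [Subtype.val_injective.extend_apply]

section Barycentric

variable {E : Type*} [AddCommGroup E] [Module ℝ E]

structure IsBarycentricCoords (s : Finset E) (w : E → ℝ) (x : E) : Prop where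
  nonneg : ∀ v ∈ s, 0 ≤ w v
  sum_eq_one : ∑ v ∈ s, w v = 1
  sum_smul_eq : ∑ v ∈ s, w v • v = x

theorem Finset.mem_convexHull_iff_exists_isBarycentricCoords {s : Finset E} {x : E} :
    x ∈ convexHull ℝ (s : Set E) ↔ ∃ w, IsBarycentricCoords s w x := by
  rw [Finset.mem_convexHull']
  exact ⟨fun ⟨w, h₀, h₁, hx⟩ => ⟨w, h₀, h₁, hx⟩, fun ⟨w, h₀, h₁, hx⟩ => ⟨w, h₀, h₁, hx⟩⟩

namespace IsBarycentricCoords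

variable {s r : Finset E} {w u : E → ℝ} {x : E}

theorem mem_convexHull (hw : IsBarycentricCoords s w x) : x ∈ convexHull ℝ (s : Set E) :=
  Finset.mem_convexHull_iff_exists_isBarycentricCoords.2 ⟨w, hw⟩

theorem eq_of_affineIndependent (hs : AffineIndependent ℝ ((↑) : s → E))
    (hw : IsBarycentricCoords s w x) (hu : IsBarycentricCoords s u x) : ∀ v ∈ s, w v = u v :=
  hs.eq_of_sum_eq_sum_subtype (by rw [hw.sum_eq_one, hu.sum_eq_one])
    (by rw [hw.sum_smul_eq, hu.sum_smul_eq])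

theorem indicator (hw : IsBarycentricCoords r w x) (hrs : r ⊆ s) :
    IsBarycentricCoords s ((r : Set E).indicator w) x where
  nonneg v _ := Set.indicator_nonneg (fun v hv => hw.nonneg v hv) v
  sum_eq_one := by rw [Finset.sum_indicator_subset w hrs, hw.sum_eq_one]
  sum_smul_eq := by
    rw [Finset.sum_indicator_subset_of_eq_zero w (fun v a => a • v) hrs (fun _ => zero_smul ℝ _),
      hw.sum_smul_eq]

end IsBarycentricCoords

end Barycentric

namespace Triangulation

variable {n : ℕ} (T : Triangulation n) {s t : Finset (Fin (n + 1) → ℝ)}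
  {w u : (Fin (n + 1) → ℝ) → ℝ} {x : Fin (n + 1) → ℝ}

theorem convexHull_subset_stdSimplex (hs : s ∈ T.cells) :
    convexHull ℝ (s : Set (Fin (n + 1) → ℝ)) ⊆ stdSimplex ℝ (Fin (n + 1)) :=
  T.covers ▸ fun _ hy => Set.mem_biUnion hs hy

theorem mem_stdSimplex_of_mem_cell (hs : s ∈ T.cells) {v : Fin (n + 1) → ℝ} (hv : v ∈ s) :
    v ∈ stdSimplex ℝ (Fin (n + 1)) :=
  T.convexHull_subset_stdSimplex hs (subset_convexHull ℝ _ hv)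

theorem mem_verts (hs : s ∈ T.cells) {v : Fin (n + 1) → ℝ} (hv : v ∈ s) : v ∈ T.verts :=
  Finset.le_sup (f := id) hs hv

theorem exists_isBarycentricCoords (hx : x ∈ stdSimplex ℝ (Fin (n + 1))) :
    ∃ s ∈ T.cells, ∃ w, IsBarycentricCoords s w x := by
  rw [← T.covers, Set.mem_iUnion₂] at hx
  obtain ⟨s, hs, hxs⟩ := hx
  exact ⟨s, hs, Finset.mem_convexHull_iff_exists_isBarycentricCoords.1 hxs⟩

/-- By face-to-face intersection and affine independence, both coordinate vectors are the
coordinates of `x` on the common face `s ∩ t`, extended by zero. -/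
theorem sum_smul_eq_of_isBarycentricCoords {F : Type*} [AddCommGroup F] [Module ℝ F]
    (g : (Fin (n + 1) → ℝ) → F) (hs : s ∈ T.cells) (ht : t ∈ T.cells)
    (hw : IsBarycentricCoords s w x) (hu : IsBarycentricCoords t u x) :
    ∑ v ∈ s, w v • g v = ∑ v ∈ t, u v • g v := by
  classical
  have hx : x ∈ convexHull ℝ ((s ∩ t : Finset _) : Set (Fin (n + 1) → ℝ)) := by
    rw [← T.face_to_face s hs t ht]
    exact ⟨hw.mem_convexHull, hu.mem_convexHull⟩
  obtain ⟨p, hp⟩ := Finset.mem_convexHull_iff_exists_isBarycentricCoords.1 hx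
  have hsum_face : ∀ {r : Finset _} {c : (Fin (n + 1) → ℝ) → ℝ}, r ∈ T.cells → s ∩ t ⊆ r →
      IsBarycentricCoords r c x → ∑ v ∈ r, c v • g v = ∑ v ∈ s ∩ t, p v • g v := by
    intro r c hr hsub hc
    have hcp := hc.eq_of_affineIndependent (T.indep r hr) (hp.indicator hsub)
    rw [Finset.sum_congr rfl fun v hv => by rw [hcp v hv],
      Finset.sum_indicator_subset_of_eq_zero p (fun v a => a • g v) hsub fun _ => zero_smul ℝ _]
  rw [hsum_face hs inter_subset_left hw, hsum_face ht inter_subset_right hu]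

variable {F : Type*} [AddCommGroup F] [Module ℝ F]

-- Every cell containing `x` yields the same value (`affineExtend_eq`); off the simplex it is junk.
noncomputable def affineExtend (g : (Fin (n + 1) → ℝ) → F) (x : Fin (n + 1) → ℝ) : F :=
  let p := Classical.epsilon fun p : Finset (Fin (n + 1) → ℝ) × ((Fin (n + 1) → ℝ) → ℝ) =>
    p.1 ∈ T.cells ∧ IsBarycentricCoords p.1 p.2 x
  ∑ v ∈ p.1, p.2 v • g v

theorem affineExtend_eq (g : (Fin (n + 1) → ℝ) → F) (hs : s ∈ T.cells)
    (hw : IsBarycentricCoords s w x) : T.affineExtend g x = ∑ v ∈ s, w v • g v :=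
  have hp := Classical.epsilon_spec (p := fun p : Finset _ × (_ → ℝ) =>
    p.1 ∈ T.cells ∧ IsBarycentricCoords p.1 p.2 x) ⟨(s, w), hs, hw⟩
  T.sum_smul_eq_of_isBarycentricCoords g hp.1 hs hp.2 hw

theorem graphOn_affineExtend (g : (Fin (n + 1) → ℝ) → F) :
    (stdSimplex ℝ (Fin (n + 1))).graphOn (T.affineExtend g) = ⋃ s ∈ T.cells,
      (fun c : s → ℝ => (∑ v, c v • (v : Fin (n + 1) → ℝ), ∑ v, c v • g v)) ''
        stdSimplex ℝ s := by
  ext ⟨x, y⟩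
  simp only [Set.mem_graphOn, Set.mem_iUnion, Set.mem_image, Prod.mk.injEq, exists_prop]
  constructor
  · rintro ⟨hx, rfl⟩
    obtain ⟨s, hs, w, hw⟩ := T.exists_isBarycentricCoords hx
    refine ⟨s, hs, fun v => w v, ⟨fun v => hw.nonneg v v.2, ?_⟩, ?_, ?_⟩
    · rw [sum_coe_sort s w, hw.sum_eq_one]
    · rw [sum_coe_sort s fun v => w v • v, hw.sum_smul_eq]
    · rw [sum_coe_sort s fun v => w v • g v, T.affineExtend_eq g hs hw]
  · rintro ⟨s, hs, c, hc, rfl, rfl⟩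
    have hw : IsBarycentricCoords s (Function.extend Subtype.val c 0) (∑ v, c v • (v : _)) :=
      ⟨fun v hv => by rw [← Subtype.coe_mk v hv, Subtype.val_injective.extend_apply]; exact hc.1 _,
        (sum_extend_val s c fun _ a => a).trans hc.2, sum_extend_val s c fun v a => a • v⟩
    exact ⟨T.convexHull_subset_stdSimplex hs hw.mem_convexHull,
      (T.affineExtend_eq g hs hw).trans (sum_extend_val s c fun v a => a • g v)⟩

theorem continuousOn_affineExtend [TopologicalSpace F] [ContinuousAdd F]
    [ContinuousSMul ℝ F] (g : (Fin (n + 1) → ℝ) → F) :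
    ContinuousOn (T.affineExtend g) (stdSimplex ℝ (Fin (n + 1))) := by
  refine continuousOn_of_isCompact_graphOn ?_
  rw [graphOn_affineExtend]
  exact T.cells.finite_toSet.isCompact_biUnion fun s _ =>
    (isCompact_stdSimplex ℝ s).image (by fun_prop)

variable (L : (Fin (n + 1) → ℝ) → Fin (n + 1))

noncomputable def labelMap : (Fin (n + 1) → ℝ) → Fin (n + 1) → ℝ :=
  T.affineExtend fun v => Pi.single (L v) 1

theorem labelMap_apply (hs : s ∈ T.cells) (hw : IsBarycentricCoords s w x) (j : Fin (n + 1)) :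
    T.labelMap L x j = ∑ v ∈ s with L v = j, w v := by
  rw [labelMap, T.affineExtend_eq _ hs hw, Finset.sum_apply, sum_filter]
  exact sum_congr rfl fun v _ => by simp [Pi.single_apply, eq_comm]

theorem mapsTo_labelMap :
    Set.MapsTo (T.labelMap L) (stdSimplex ℝ (Fin (n + 1))) (stdSimplex ℝ (Fin (n + 1))) := by
  intro x hx
  obtain ⟨s, hs, w, hw⟩ := T.exists_isBarycentricCoords hx
  rw [labelMap, T.affineExtend_eq _ hs hw]
  exact (convex_stdSimplex ℝ _).sum_mem hw.nonneg hw.sum_eq_one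
    fun v _ => single_mem_stdSimplex ℝ (L v)

theorem continuousOn_labelMap : ContinuousOn (T.labelMap L) (stdSimplex ℝ (Fin (n + 1))) :=
  T.continuousOn_affineExtend _

theorem exists_label_of_labelMap_apply_pos (hs : s ∈ T.cells) (hw : IsBarycentricCoords s w x)
    {j : Fin (n + 1)} (h : 0 < T.labelMap L x j) : ∃ v ∈ s, 0 < w v ∧ L v = j := by
  rw [T.labelMap_apply L hs hw] at h
  obtain ⟨v, hv, hwv⟩ := exists_lt_of_sum_lt (f := fun _ => (0 : ℝ)) (by simpa using h)
  exact ⟨v, (mem_filter.1 hv).1, hwv, (mem_filter.1 hv).2⟩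

end Triangulation

namespace IsSpernerLabelling

variable {n : ℕ} {T : Triangulation n} {L : (Fin (n + 1) → ℝ) → Fin (n + 1)}

theorem apply_pos (hL : IsSpernerLabelling T L) {s : Finset (Fin (n + 1) → ℝ)}
    {w : (Fin (n + 1) → ℝ) → ℝ} {x v : Fin (n + 1) → ℝ} (hs : s ∈ T.cells)
    (hw : IsBarycentricCoords s w x) (hv : v ∈ s) (hwv : 0 < w v) : 0 < x (L v) := by
  calc 0 < w v * v (L v) := mul_pos hwv (hL v (T.mem_verts hs hv))
    _ ≤ ∑ u ∈ s, w u * u (L v) := single_le_sum (f := fun u => w u * u (L v))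
        (fun u hu => mul_nonneg (hw.nonneg u hu) ((T.mem_stdSimplex_of_mem_cell hs hu).1 _)) hv
    _ = x (L v) := by simp [← hw.sum_smul_eq, Finset.sum_apply]

theorem exists_image_eq_univ_of_brouwer (hL : IsSpernerLabelling T L)
    (brouwer : ∀ f : (Fin (n + 1) → ℝ) → (Fin (n + 1) → ℝ),
      ContinuousOn f (stdSimplex ℝ (Fin (n + 1))) →
      Set.MapsTo f (stdSimplex ℝ (Fin (n + 1))) (stdSimplex ℝ (Fin (n + 1))) →
        ∃ x ∈ stdSimplex ℝ (Fin (n + 1)), f x = x) :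
    ∃ s ∈ T.cells, s.image L = univ := by
  classical
  obtain ⟨x, hx, hfix⟩ := brouwer (fun y => T.labelMap L y ∘ finRotate (n + 1))
    (continuousOn_pi.2 fun i => continuousOn_pi.1 (T.continuousOn_labelMap L) _)
    fun y hy => comp_equiv_mem_stdSimplex (T.mapsTo_labelMap L hy) _
  have hfix' (i : Fin (n + 1)) : T.labelMap L x (i + 1) = x i := by
    rw [← finRotate_apply]
    exact congrFun hfix i
  obtain ⟨s, hs, w, hw⟩ := T.exists_isBarycentricCoords hx
  obtain ⟨a, -, ha⟩ := exists_lt_of_sum_lt (s := univ) (f := fun _ => (0 : ℝ)) (g := x)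
    (by simp [hx.2])
  have hpos : ∀ i, 0 < x i := Fin.forall_of_imp_add_one ha fun i hi => by
    obtain ⟨v, hv, hwv, hLv⟩ := T.exists_label_of_labelMap_apply_pos L hs hw ((hfix' i).symm ▸ hi)
    exact hLv ▸ hL.apply_pos hs hw hv hwv
  refine ⟨s, hs, eq_univ_of_forall fun j => ?_⟩
  have hj : 0 < T.labelMap L x j := by
    rw [← sub_add_cancel j 1, hfix']
    exact hpos _
  obtain ⟨v, hv, -, rfl⟩ := T.exists_label_of_labelMap_apply_pos L hs hw hj
  exact mem_image_of_mem L hv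

end IsSpernerLabelling

/-- Brouwer's fixed-point theorem for the standard 2-simplex implies the
two-dimensional Sperner lemma. -/
theorem brouwer_implies_sperner_two_dim
    (brouwer : ∀ f : (Fin 3 → ℝ) → (Fin 3 → ℝ),
      ContinuousOn f (stdSimplex ℝ (Fin 3)) →
      Set.MapsTo f (stdSimplex ℝ (Fin 3)) (stdSimplex ℝ (Fin 3)) →
        ∃ x ∈ stdSimplex ℝ (Fin 3), f x = x)
    (T : Triangulation 2) (L : (Fin 3 → ℝ) → Fin 3) (hL : IsSpernerLabelling T L) :
    ∃ s ∈ T.cells, s.image L = (Finset.univ : Finset (Fin 3)) :=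
  hL.exists_image_eq_univ_of_brouwer brouwer
end
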